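/- arXiv:1001.1779 — 5 statements merged into one kernel-verified Lean document; each statement's English description precedes it below -/
import Mathlib

section
/- For all positive integers n, m, l, the following two maps on F_n × F_m × F_l coincide: P = (φ_{n,m}^{-1} × id_l) ∘ χ_{nm,l} ∘ (φ_{n,m} × id_l) and Q = (id_n × θ_{l,m}) ∘ (χ_{n,l} × id_m) ∘ (id_n × θ_{m,l}) ∘ (id_n × χ_{m,l}). -/
/-- `F n = {1, ..., n}` as a set of natural numbers. -/
def F (n : ℕ) : Set ℕ := Set.Icc 1 n

/-- The map φ_{n,m}(i,j) = m(i-1)+j. -/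
def phi (n m : ℕ) (p : ℕ × ℕ) : ℕ := m * (p.1 - 1) + p.2

/-- Uniqueness of the mixed-radix decomposition: if `N = a*(y-1)+x` with
`1 ≤ x ≤ a` and `1 ≤ y`, then `x` and `y` are determined by `N`. -/
lemma chi_uniq (a x y N : ℕ) (hx1 : 1 ≤ x) (hxa : x ≤ a) (hy1 : 1 ≤ y)
    (hN : N = a * (y - 1) + x) :
    x = (N - 1) % a + 1 ∧ y = (N - 1) / a + 1 := by
  have ha : 0 < a := lt_of_lt_of_le hx1 hxa
  have h1 : N - 1 = (x - 1) + a * (y - 1) := by omega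
  constructor
  · rw [h1, Nat.add_mul_mod_self_left, Nat.mod_eq_of_lt (by omega)]; omega
  · rw [h1, Nat.add_mul_div_left _ _ ha, Nat.div_eq_of_lt (by omega)]; omega

/-- For all positive integers n, m, l, the two maps
P = (φ_{n,m}^{-1} × id_l) ∘ χ_{nm,l} ∘ (φ_{n,m} × id_l) and
Q = (id_n × θ_{l,m}) ∘ (χ_{n,l} × id_m) ∘ (id_n × θ_{m,l}) ∘ (id_n × χ_{m,l})
coincide on F_n × F_m × F_l.  Here χ_{a,b} is the permutation of F_a × F_b
defined by b(i-1)+j = a(j'-1)+i', and θ_{a,b} is the flip. -/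
theorem stmt_7 (n m l : ℕ) (hn : 0 < n) (hm : 0 < m) (hl : 0 < l)
    (χ : ℕ → ℕ → ℕ × ℕ → ℕ × ℕ)
    (hχ : ∀ a b : ℕ, 0 < a → 0 < b → ∀ p ∈ F a ×ˢ F b,
      χ a b p ∈ F a ×ˢ F b ∧
      b * (p.1 - 1) + p.2 = a * ((χ a b p).2 - 1) + (χ a b p).1) :
    ∀ i ∈ F n, ∀ j ∈ F m, ∀ k ∈ F l,
      -- a, b realize φ_{n,m}^{-1} applied to the first component of
      -- χ_{nm,l}(φ_{n,m}(i,j), k)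
      ∀ a b : ℕ, (a, b) ∈ F n ×ˢ F m →
        phi n m (a, b) = (χ (n * m) l (phi n m (i, j), k)).1 →
        (a, b, (χ (n * m) l (phi n m (i, j), k)).2) =
          ((χ n l (i, (χ m l (j, k)).2)).1, (χ m l (j, k)).1,
            (χ n l (i, (χ m l (j, k)).2)).2) := by
  intro i hi j hj k hk a b hab hphi
  simp only [F, Set.mem_Icc] at hi hj hk
  simp only [F, Set.mem_prod, Set.mem_Icc] at hab
  obtain ⟨⟨ha1, han⟩, hb1, hbm⟩ := hab
  obtain ⟨hi1, hin⟩ := hi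
  obtain ⟨hj1, hjm⟩ := hj
  obtain ⟨hk1, hkl⟩ := hk
  -- analyze χ m l (j, k)
  obtain ⟨hmem2, heq2⟩ := hχ m l hm hl (j, k)
    (by simp only [F, Set.mem_prod, Set.mem_Icc]; omega)
  simp only [F, Set.mem_prod, Set.mem_Icc] at hmem2
  set j' := (χ m l (j, k)).1 with hj'
  set k' := (χ m l (j, k)).2 with hk'
  simp only at heq2
  set N2 := l * (j - 1) + k with hN2
  obtain ⟨ej', ek'⟩ := chi_uniq m j' k' N2 hmem2.1.1 hmem2.1.2 hmem2.2.1 heq2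
  -- analyze χ n l (i, k')
  obtain ⟨hmem3, heq3⟩ := hχ n l hn hl (i, k')
    (by simp only [F, Set.mem_prod, Set.mem_Icc]; omega)
  simp only [F, Set.mem_prod, Set.mem_Icc] at hmem3
  set i'' := (χ n l (i, k')).1 with hi''
  set s'' := (χ n l (i, k')).2 with hs''
  simp only at heq3
  set N3 := l * (i - 1) + k' with hN3
  obtain ⟨ei'', es''⟩ := chi_uniq n i'' s'' N3 hmem3.1.1 hmem3.1.2 hmem3.2.1 heq3
  -- analyze χ (n*m) l (phi n m (i,j), k)
  have hnm : 0 < n * m := Nat.mul_pos hn hm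
  have hphimem : phi n m (i, j) ∈ F (n * m) := by
    simp only [F, Set.mem_Icc, phi]
    have h1 : m * (i - 1) ≤ m * (n - 1) := Nat.mul_le_mul_left m (by omega)
    have h2 : m * (n - 1) + m = n * m := by
      cases n with
      | zero => omega
      | succ n => rw [Nat.succ_sub_one]; ring
    omega
  obtain ⟨hmem1, heq1⟩ := hχ (n * m) l hnm hl (phi n m (i, j), k)
    (by simp only [F, Set.mem_prod, Set.mem_Icc]; exact ⟨hphimem, hk1, hkl⟩)
  simp only [F, Set.mem_prod, Set.mem_Icc] at hmem1
  set r1 := (χ (n * m) l (phi n m (i, j), k)).1 with hr1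
  set s1 := (χ (n * m) l (phi n m (i, j), k)).2 with hs1
  simp only at heq1
  set N1 := l * (phi n m (i, j) - 1) + k with hN1def
  obtain ⟨er1, es1⟩ := chi_uniq (n * m) r1 s1 N1 hmem1.1.1 hmem1.1.2 hmem1.2.1 heq1
  -- analyze a, b from hphi
  have hphiab : r1 = m * (a - 1) + b := by rw [← hphi]; rfl
  obtain ⟨eb, ea⟩ := chi_uniq m b a r1 hb1 hbm ha1 hphiab
  -- key arithmetic decomposition
  have e1 : N1 - 1 = (N2 - 1) + m * (l * (i - 1)) := by
    have h : l * (phi n m (i, j) - 1) = m * (l * (i - 1)) + l * (j - 1) := by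
      show l * (m * (i - 1) + j - 1) = _
      rw [show m * (i - 1) + j - 1 = m * (i - 1) + (j - 1) from by omega]; ring
    omega
  have ediv : (N1 - 1) / m = (N2 - 1) / m + l * (i - 1) := by
    rw [e1, Nat.add_mul_div_left _ _ hm]
  have emod : (N1 - 1) % m = (N2 - 1) % m := by
    rw [e1, Nat.add_mul_mod_self_left]
  have eN3 : N3 - 1 = l * (i - 1) + (N2 - 1) / m := by omega
  have hswap : (N2 - 1) / m + l * (i - 1) = N3 - 1 := by omega
  have hr1m : r1 - 1 = (N1 - 1) % (n * m) := by omega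
  rw [hr1m] at eb ea
  -- conclude componentwise
  have hb_eq : b = j' := by
    have h : (N1 - 1) % (n * m) % m = (N1 - 1) % m :=
      Nat.mod_mod_of_dvd _ (dvd_mul_left m n)
    omega
  have hdivdiv : (N1 - 1) % (n * m) / m = (N1 - 1) / m % n := by
    rw [mul_comm n m]; exact Nat.mod_mul_right_div_self _ _ _
  have ha_eq : a = i'' := by
    rw [ea, ei'', hdivdiv, ediv, hswap]
  have hs_eq : s1 = s'' := by
    rw [es1, es'', show n * m = m * n from mul_comm n m, ← Nat.div_div_eq_div_mul,
      ediv, hswap]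
  rw [hb_eq, ha_eq, hs_eq]
end

section
/- For all positive integers n, m, l, the following two maps on F_n × F_m × F_l coincide: (id_n × φ_{m,l}^{-1}) ∘ χ_{n,ml} ∘ (id_n × φ_{m,l}) and (θ_{m,n} × id_l) ∘ (id_m × χ_{n,l}) ∘ (θ_{n,m} × id_l) ∘ (χ_{n,m} × id_l), i.e. the composition corresponding to R_{13}R_{12}: first apply χ_{n,m} in legs (1,2), then, after swapping, apply χ_{n,l} in legs (1,3). -/
/-- Uniqueness of the representation `a*(j-1)+i` with `1 ≤ i ≤ a`, `1 ≤ j`. -/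
lemma uniq_rep (a i i' j j' : ℕ) (hi : 1 ≤ i) (hia : i ≤ a)
    (hi' : 1 ≤ i') (hia' : i' ≤ a) (hj : 1 ≤ j) (hj' : 1 ≤ j')
    (h : a * (j - 1) + i = a * (j' - 1) + i') : i = i' ∧ j = j' := by
  have h2 : a * (j - 1) + (i - 1) = a * (j' - 1) + (i' - 1) := by omega
  have hm1 : (a * (j - 1) + (i - 1)) % a = i - 1 := by
    rw [Nat.mul_add_mod]
    exact Nat.mod_eq_of_lt (by omega)
  have hm2 : (a * (j' - 1) + (i' - 1)) % a = i' - 1 := by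
    rw [Nat.mul_add_mod]
    exact Nat.mod_eq_of_lt (by omega)
  rw [h2] at hm1
  have hii : i = i' := by omega
  subst hii
  have : a * (j - 1) = a * (j' - 1) := by omega
  have := Nat.eq_of_mul_eq_mul_left (show 0 < a by omega) this
  omega

/-- For all positive integers n, m, l, the two maps on
F_n × F_m × F_l coincide:
(id_n × φ_{m,l}^{-1}) ∘ χ_{n,ml} ∘ (id_n × φ_{m,l})  and
(θ_{m,n} × id_l) ∘ (id_m × χ_{n,l}) ∘ (θ_{n,m} × id_l) ∘ (χ_{n,m} × id_l).
Here χ_{a,b} is the permutation of F_a × F_b defined by b(i-1)+j = a(j'-1)+i',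
and θ_{a,b} : F_a × F_b → F_b × F_a is the flip.  This is the combinatorial
identity underlying (id ⊗ Δ)(R) = R_{13}R_{12}. -/
theorem stmt_8 (n m l : ℕ) (hn : 0 < n) (hm : 0 < m) (hl : 0 < l)
    (χ : ℕ → ℕ → ℕ × ℕ → ℕ × ℕ)
    (hχ : ∀ a b : ℕ, 0 < a → 0 < b → ∀ p ∈ F a ×ˢ F b,
      χ a b p ∈ F a ×ˢ F b ∧
      b * (p.1 - 1) + p.2 = a * ((χ a b p).2 - 1) + (χ a b p).1) :
    ∀ i ∈ F n, ∀ j ∈ F m, ∀ k ∈ F l,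
      -- b, c realize φ_{m,l}^{-1} applied to the second component of
      -- χ_{n,ml}(i, φ_{m,l}(j,k))
      ∀ b c : ℕ, (b, c) ∈ F m ×ˢ F l →
        phi m l (b, c) = (χ n (m * l) (i, phi m l (j, k))).2 →
        ((χ n (m * l) (i, phi m l (j, k))).1, b, c) =
          ((χ n l ((χ n m (i, j)).1, k)).1, (χ n m (i, j)).2,
            (χ n l ((χ n m (i, j)).1, k)).2) := by
  intro i hi j hj k hk b c hbc hphi
  simp only [F, Set.mem_prod, Set.mem_Icc] at hi hj hk hbc
  -- φ_{m,l}(j,k) ∈ F (m*l)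
  have hphi_mem : phi m l (j, k) ∈ F (m * l) := by
    simp only [F, Set.mem_Icc, phi]
    constructor
    · omega
    · have h1 : l * (j - 1) + k ≤ l * (m - 1) + l :=
        add_le_add (Nat.mul_le_mul_left _ (by omega)) hk.2
      have h2 : l * (m - 1) + l = m * l := by
        obtain ⟨m', rfl⟩ : ∃ m', m = m' + 1 := ⟨m - 1, by omega⟩
        simp only [Nat.add_sub_cancel]
        ring
      omega
  -- first application: χ_{n,ml}
  obtain ⟨hAB, eAB⟩ := hχ n (m * l) hn (by positivity) (i, phi m l (j, k))
    (by simp only [Set.mem_prod]; exact ⟨by simpa [F] using hi, hphi_mem⟩)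
  set A := (χ n (m * l) (i, phi m l (j, k))).1 with hAdef
  set B := (χ n (m * l) (i, phi m l (j, k))).2 with hBdef
  simp only [Set.mem_prod, F, Set.mem_Icc] at hAB
  -- χ_{n,m}(i,j) = (p,q)
  obtain ⟨hpq, epq⟩ := hχ n m hn hm (i, j)
    (by simp only [Set.mem_prod, F, Set.mem_Icc]; exact ⟨hi, hj⟩)
  set p := (χ n m (i, j)).1 with hpdef
  set q := (χ n m (i, j)).2 with hqdef
  simp only [Set.mem_prod, F, Set.mem_Icc] at hpq
  -- χ_{n,l}(p,k) = (r,s)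
  obtain ⟨hrs, ers⟩ := hχ n l hn hl (p, k)
    (by simp only [Set.mem_prod, F, Set.mem_Icc]; exact ⟨hpq.1, hk⟩)
  set r := (χ n l (p, k)).1 with hrdef
  set s := (χ n l (p, k)).2 with hsdef
  simp only [Set.mem_prod, F, Set.mem_Icc] at hrs
  -- key computation: n*(l*(q-1)+s-1)+r = m*l*(i-1) + (l*(j-1)+k)
  have key : n * ((l * (q - 1) + s) - 1) + r = m * l * (i - 1) + (l * (j - 1) + k) := by
    have e1 : m * (i - 1) + j = n * (q - 1) + p := epq
    have e2 : l * (p - 1) + k = n * (s - 1) + r := ers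
    have expand : n * ((l * (q - 1) + s) - 1) + r
        = n * (l * (q - 1)) + (n * (s - 1) + r) := by
      have : (l * (q - 1) + s) - 1 = l * (q - 1) + (s - 1) := by omega
      rw [this, Nat.mul_add]
      ring
    rw [expand, ← e2]
    have expand2 : n * (l * (q - 1)) + (l * (p - 1) + k)
        = l * ((n * (q - 1) + p) - 1) + k := by
      have : (n * (q - 1) + p) - 1 = n * (q - 1) + (p - 1) := by omega
      rw [this, Nat.mul_add]
      ring_nf
    rw [expand2, ← e1]
    have : (m * (i - 1) + j) - 1 = m * (i - 1) + (j - 1) := by omega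
    rw [this, Nat.mul_add]
    ring
  -- from eAB: n*(B-1)+A = m*l*(i-1) + (l*(j-1)+k)
  have eAB' : n * (B - 1) + A = m * l * (i - 1) + (l * (j - 1) + k) := by
    have : m * l * (i - 1) + phi m l (j, k) = n * (B - 1) + A := eAB
    simpa [phi] using this.symm
  -- uniqueness in base n: A = r and B = l*(q-1)+s
  have hqs_pos : 1 ≤ l * (q - 1) + s := by omega
  have huniq1 := uniq_rep n A r B (l * (q - 1) + s) hAB.1.1 hAB.1.2
    hrs.1.1 hrs.1.2 hAB.2.1 hqs_pos (by rw [eAB', key])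
  obtain ⟨hAr, hBqs⟩ := huniq1
  -- now hphi : l*(b-1)+c = B = l*(q-1)+s, uniqueness in base l
  have hphi' : l * (q - 1) + s = l * (b - 1) + c := by
    have : phi m l (b, c) = B := hphi
    simp only [phi] at this
    omega
  have huniq2 := uniq_rep l s c (q) (b) hrs.2.1 hrs.2.2 hbc.2.1 hbc.2.2
    hpq.2.1 hbc.1.1 hphi'
  obtain ⟨hsc, hqb⟩ := huniq2
  simp [hAr, ← hsc, ← hqb]
end

section
/- For all positive integers n, m, the composition R^{(n,m)} ∘ τ ∘ R^{(m,n)} ∘ τ' equals the identity on C^n ⊗ C^m, where τ : C^m ⊗ C^n → C^n ⊗ C^m and τ' are the tensor flips; equivalently, R^{(n,m)} · τ_{m,n}(R^{(m,n)}) = I_n ⊗ I_m as elements of M_n(C) ⊗ M_m(C). -/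
/-- The R-matrix R^{(n,m)} on C^n ⊗ C^m (indexed 0-based): it maps the basis
vector e_i ⊗ e_j to e_{i'} ⊗ e_{j'} where m·i + j = n·j' + i' (the 0-based form
of m(i-1)+j = n(j'-1)+i'). -/
def Rmat (n m : ℕ) : Matrix (Fin n × Fin m) (Fin n × Fin m) ℂ :=
  Matrix.of fun p q =>
    if m * (q.1 : ℕ) + (q.2 : ℕ) = n * (p.2 : ℕ) + (p.1 : ℕ) then 1 else 0

lemma unique_decomp {m : ℕ} (a c b d : ℕ) (hb : b < m) (hd : d < m)
    (h : m * a + b = m * c + d) : a = c ∧ b = d := by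
  have hbd : b = d := by
    have h1 : (m * a + b) % m = b := by
      rw [Nat.mul_add_mod]; exact Nat.mod_eq_of_lt hb
    have h2 : (m * c + d) % m = d := by
      rw [Nat.mul_add_mod]; exact Nat.mod_eq_of_lt hd
    rw [← h1, h, h2]
  refine ⟨?_, hbd⟩
  subst hbd
  have := Nat.add_right_cancel h
  exact Nat.eq_of_mul_eq_mul_left (Nat.pos_of_ne_zero (by rintro rfl; omega)) this

theorem stmt_10 (n m : ℕ) (hn : 0 < n) (hm : 0 < m) :
    Rmat n m * (Rmat m n).submatrix Prod.swap Prod.swap = 1 := by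
  ext p q
  rw [Matrix.mul_apply]
  have hkm : n * (p.2 : ℕ) + (p.1 : ℕ) < m * n := by
    have h1 : (p.1 : ℕ) < n := p.1.isLt
    have h2 : (p.2 : ℕ) < m := p.2.isLt
    calc n * (p.2 : ℕ) + (p.1 : ℕ) < n * (p.2 : ℕ) + n := by omega
    _ = n * ((p.2 : ℕ) + 1) := by ring
    _ ≤ n * m := Nat.mul_le_mul_left n h2
    _ = m * n := Nat.mul_comm n m
  set k : ℕ := n * (p.2 : ℕ) + (p.1 : ℕ) with hk
  -- the unique middle index
  have hdiv : k / m < n := Nat.div_lt_of_lt_mul hkm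
  have hmod : k % m < m := Nat.mod_lt _ hm
  set r0 : Fin n × Fin m := (⟨k / m, hdiv⟩, ⟨k % m, hmod⟩) with hr0
  have hA : m * ((r0.1 : ℕ)) + (r0.2 : ℕ) = k := Nat.div_add_mod k m
  rw [Finset.sum_eq_single r0]
  · simp only [Rmat, Matrix.of_apply, Matrix.submatrix_apply, Prod.fst_swap, Prod.snd_swap,
      Matrix.one_apply]
    rw [if_pos hA]
    by_cases hq : n * ((q.2 : ℕ)) + (q.1 : ℕ) = m * ((r0.1 : ℕ)) + (r0.2 : ℕ)
    · rw [if_pos hq]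
      have heq : n * ((q.2 : ℕ)) + (q.1 : ℕ) = n * ((p.2 : ℕ)) + (p.1 : ℕ) := by
        rw [hq, hA]
      obtain ⟨h1, h2⟩ := unique_decomp (q.2 : ℕ) (p.2 : ℕ) (q.1 : ℕ) (p.1 : ℕ)
        q.1.isLt p.1.isLt heq
      have : p = q := by
        ext
        · exact (Fin.val_eq_val _ _).mp h2.symm ▸ rfl
        · exact h1.symm ▸ rfl
      rw [if_pos this]
      ring
    · rw [if_neg hq]
      have : ¬ p = q := by
        rintro rfl
        exact hq (by rw [hA])
      rw [if_neg this]
      ring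
  · intro r _ hr
    simp only [Rmat, Matrix.of_apply]
    have : ¬ (m * ((r.1 : ℕ)) + (r.2 : ℕ) = k) := by
      intro h
      apply hr
      have := unique_decomp (r.1 : ℕ) (r0.1 : ℕ) (r.2 : ℕ) (r0.2 : ℕ)
        r.2.isLt r0.2.isLt (by rw [h, hA])
      ext
      · exact this.1
      · exact this.2
    rw [if_neg this, zero_mul]
  · intro h
    exact absurd (Finset.mem_univ r0) h
end

section
/- For all positive integers n, m, l, the quasi-triangularity identity (φ_{n,m} ⊗ id_{M_l(C)})(R^{(nm,l)}) = R^{(n,l)}_{13} R^{(m,l)}_{23} holds in M_n(C) ⊗ M_m(C) ⊗ M_l(C), where the subscripts are leg numbering notation. -/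
/-- The index bijection F_n × F_m → F_{nm} (0-based): (i,j) ↦ m·i + j. -/
def phiIdx {n m : ℕ} (i : Fin n) (j : Fin m) : Fin (n * m) :=
  ⟨m * (i : ℕ) + (j : ℕ), by
    have h1 := i.isLt
    have h2 := j.isLt
    nlinarith⟩

/-- φ_{n,m} ⊗ id_{M_l(C)} applied to y ∈ M_{nm}(C) ⊗ M_l(C), landing in
M_n(C) ⊗ M_m(C) ⊗ M_l(C). -/
def phiTensorId (n m l : ℕ)
    (y : Matrix (Fin (n * m) × Fin l) (Fin (n * m) × Fin l) ℂ) :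
    Matrix (Fin n × Fin m × Fin l) (Fin n × Fin m × Fin l) ℂ :=
  Matrix.of fun p q =>
    y (phiIdx p.1 p.2.1, p.2.2) (phiIdx q.1 q.2.1, q.2.2)

/-- Leg embedding X ↦ X_{13} : M_n ⊗ M_l → M_n ⊗ M_m ⊗ M_l. -/
def leg13 {n l : ℕ} (m : ℕ) (X : Matrix (Fin n × Fin l) (Fin n × Fin l) ℂ) :
    Matrix (Fin n × Fin m × Fin l) (Fin n × Fin m × Fin l) ℂ :=
  Matrix.of fun p q =>
    X (p.1, p.2.2) (q.1, q.2.2) * (if p.2.1 = q.2.1 then 1 else 0)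

/-- Leg embedding X ↦ X_{23} : M_m ⊗ M_l → M_n ⊗ M_m ⊗ M_l. -/
def leg23 {m l : ℕ} (n : ℕ) (X : Matrix (Fin m × Fin l) (Fin m × Fin l) ℂ) :
    Matrix (Fin n × Fin m × Fin l) (Fin n × Fin m × Fin l) ℂ :=
  Matrix.of fun p q =>
    X p.2 q.2 * (if p.1 = q.1 then 1 else 0)

/-- For all positive integers n, m, l, the quasi-triangularity
identity (φ_{n,m} ⊗ id_{M_l(C)})(R^{(nm,l)}) = R^{(n,l)}_{13} R^{(m,l)}_{23}
holds in M_n(C) ⊗ M_m(C) ⊗ M_l(C). -/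
theorem stmt_15 (n m l : ℕ) (hn : 0 < n) (hm : 0 < m) (hl : 0 < l) :
    phiTensorId n m l (Rmat (n * m) l) =
      leg13 m (Rmat n l) * leg23 n (Rmat m l) := by
  ext ⟨i, j, k⟩ ⟨i', j', k'⟩
  simp only [phiTensorId, Rmat, leg13, leg23, Matrix.mul_apply, Matrix.of_apply, phiIdx,
    Fintype.sum_prod_type, mul_ite, ite_mul, mul_one, mul_zero, one_mul, zero_mul]
  rw [Fintype.sum_eq_single i' (fun b hb => by simp [hb])]
  simp only [eq_self_iff_true, if_true]
  rw [Fintype.sum_eq_single j (fun b hb => by simp [Ne.symm hb])]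
  simp only [eq_self_iff_true, if_true]
  by_cases h : l * (m * (i' : ℕ) + (j' : ℕ)) + (k' : ℕ) = n * m * k + (m * i + j)
  · rw [if_pos h]
    have hz : (l:ℤ) * (m * i' + j') + k' = n * m * k + (m * i + j) := by exact_mod_cast h
    have hj : ((j:ℕ):ℤ) < m := by exact_mod_cast j.isLt
    have hj' : ((j':ℕ):ℤ) < m := by exact_mod_cast j'.isLt
    have hk' : ((k':ℕ):ℤ) < l := by exact_mod_cast k'.isLt
    have hm' : (0:ℤ) < m := by exact_mod_cast hm
    have hl' : (0:ℤ) < l := by exact_mod_cast hl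
    set t : ℤ := (n:ℤ) * k + i - l * i' with ht
    have hmt : (m:ℤ) * t = l * j' + k' - j := by rw [ht]; linear_combination -hz
    have ht0 : 0 ≤ t := by
      nlinarith [hmt, hj, hm', hl', Int.natCast_nonneg j', Int.natCast_nonneg k',
        Int.natCast_nonneg j]
    have htl : t < l := by
      nlinarith [hmt, hj', hk', hm', hl', Int.natCast_nonneg j, Int.natCast_nonneg j',
        Int.natCast_nonneg k']
    have htoNat : t.toNat < l := by omega
    have h1 : ((t.toNat : ℕ) : ℤ) = t := Int.toNat_of_nonneg ht0
    have hA : l * (i' : ℕ) + t.toNat = n * k + i := by zify; rw [h1, ht]; ring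
    have hB : l * (j' : ℕ) + (k' : ℕ) = m * t.toNat + j := by zify; rw [h1]; linarith [hmt]
    have hside : ∀ b : Fin l, b ≠ (⟨t.toNat, htoNat⟩ : Fin l) →
        (if l * (j':ℕ) + (k':ℕ) = m * (b:ℕ) + j then
          (if l * (i':ℕ) + (b:ℕ) = n * k + i then (1:ℂ) else 0) else 0) = 0 := by
      intro b hb
      split_ifs with h1' h2'
      · exact absurd (Fin.ext (Nat.add_left_cancel (h2'.trans hA.symm))) hb
      · rfl
      · rfl
    rw [Fintype.sum_eq_single (⟨t.toNat, htoNat⟩ : Fin l) hside]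
    simp [hA, hB]
  · rw [if_neg h]
    symm
    apply Finset.sum_eq_zero
    intro c _
    split_ifs with h1 h2
    · exfalso; apply h; zify; zify at h1 h2; linear_combination m * h2 + h1
    · rfl
    · rfl
end

section
/- For all positive integers n, m, l, the R-matrices satisfy the Yang–Baxter equation R^{(n,m)}_{12} R^{(n,l)}_{13} R^{(m,l)}_{23} = R^{(m,l)}_{23} R^{(n,l)}_{13} R^{(n,m)}_{12} in M_n(C) ⊗ M_m(C) ⊗ M_l(C). -/
/-- Leg embedding X ↦ X_{12} : M_n ⊗ M_m → M_n ⊗ M_m ⊗ M_l. -/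
def leg12 {n m : ℕ} (l : ℕ) (X : Matrix (Fin n × Fin m) (Fin n × Fin m) ℂ) :
    Matrix (Fin n × Fin m × Fin l) (Fin n × Fin m × Fin l) ℂ :=
  Matrix.of fun p q =>
    X (p.1, p.2.1) (q.1, q.2.1) * (if p.2.2 = q.2.2 then 1 else 0)

def permMat {α : Type*} [DecidableEq α] [Fintype α] (f : α → α) : Matrix α α ℂ :=
  Matrix.of fun p q => if p = f q then 1 else 0

lemma permMat_mul {α : Type*} [DecidableEq α] [Fintype α] (f g : α → α) :
    permMat f * permMat g = permMat (f ∘ g) := by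
  ext p q
  simp [permMat, Matrix.mul_apply, Function.comp, ite_mul, mul_ite, Finset.sum_ite_eq]

def rperm (n m : ℕ) (hn : 0 < n) (hm : 0 < m) : Fin n × Fin m → Fin n × Fin m :=
  fun q => (⟨(m * q.1 + q.2) % n, Nat.mod_lt _ hn⟩,
            ⟨(m * q.1 + q.2) / n, by
              refine (Nat.div_lt_iff_lt_mul hn).mpr ?_
              have h1 : (q.1 : ℕ) < n := q.1.isLt
              have h2 : (q.2 : ℕ) < m := q.2.isLt
              calc m * q.1 + q.2 < m * q.1 + m := by omega
                _ = m * (q.1 + 1) := by ring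
                _ ≤ m * n := Nat.mul_le_mul_left m h1⟩)

lemma rperm_spec (n m : ℕ) (hn : 0 < n) (hm : 0 < m) (q p : Fin n × Fin m) :
    p = rperm n m hn hm q ↔ n * (p.2 : ℕ) + p.1 = m * q.1 + q.2 := by
  constructor
  · rintro rfl
    simp only [rperm]
    exact Nat.div_add_mod _ _
  · intro h
    have h1 : (p.1 : ℕ) < n := p.1.isLt
    have key : (p.1 : ℕ) = (m * q.1 + q.2) % n ∧ (p.2 : ℕ) = (m * q.1 + q.2) / n := by
      constructor
      · rw [← h, Nat.add_comm, Nat.add_mul_mod_self_left, Nat.mod_eq_of_lt h1]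
      · rw [← h, Nat.add_comm, Nat.add_mul_div_left _ _ hn, Nat.div_eq_of_lt h1, Nat.zero_add]
    ext
    · exact key.1
    · exact key.2

lemma Rmat_eq (n m : ℕ) (hn : 0 < n) (hm : 0 < m) :
    Rmat n m = permMat (rperm n m hn hm) := by
  ext p q
  simp only [Rmat, permMat, Matrix.of_apply]
  have hiff : (m * (q.1:ℕ) + q.2 = n * (p.2:ℕ) + p.1) ↔ (p = rperm n m hn hm q) := by
    rw [rperm_spec]; omega
  rw [if_congr hiff rfl rfl]

lemma leg12_perm {n m : ℕ} (l : ℕ) (f : Fin n × Fin m → Fin n × Fin m) :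
    leg12 l (permMat f) =
      permMat (fun q => ((f (q.1, q.2.1)).1, (f (q.1, q.2.1)).2, q.2.2)) := by
  ext p q
  simp only [leg12, permMat, Matrix.of_apply, Prod.ext_iff]
  split_ifs <;> simp_all

lemma leg13_perm {n l : ℕ} (m : ℕ) (f : Fin n × Fin l → Fin n × Fin l) :
    leg13 m (permMat f) =
      permMat (fun q => ((f (q.1, q.2.2)).1, q.2.1, (f (q.1, q.2.2)).2)) := by
  ext p q
  simp only [leg13, permMat, Matrix.of_apply, Prod.ext_iff]
  split_ifs <;> simp_all

lemma leg23_perm {m l : ℕ} (n : ℕ) (f : Fin m × Fin l → Fin m × Fin l) :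
    leg23 n (permMat f) = permMat (fun q => (q.1, f q.2)) := by
  ext p q
  simp only [leg23, permMat, Matrix.of_apply, Prod.ext_iff]
  split_ifs <;> simp_all

lemma triple_unique {n m l : ℕ} (x x' : Fin n) (y y' : Fin m) (z z' : Fin l)
    (h : (x : ℕ) + n * (y + m * z) = (x' : ℕ) + n * (y' + m * z')) :
    x = x' ∧ y = y' ∧ z = z' := by
  have hn : 0 < n := x.pos
  have hm : 0 < m := y.pos
  have hx : (x : ℕ) = x' := by
    have := congrArg (· % n) h
    simpa [Nat.add_mul_mod_self_left, Nat.mod_eq_of_lt x.isLt,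
      Nat.mod_eq_of_lt x'.isLt] using this
  have h2 : (y : ℕ) + m * z = (y' : ℕ) + m * z' := by
    have := h
    rw [hx] at this
    exact Nat.eq_of_mul_eq_mul_left hn (by omega)
  have hy : (y : ℕ) = y' := by
    have := congrArg (· % m) h2
    simpa [Nat.add_mul_mod_self_left, Nat.mod_eq_of_lt y.isLt,
      Nat.mod_eq_of_lt y'.isLt] using this
  have hz : (z : ℕ) = z' := by
    rw [hy] at h2
    have := Nat.eq_of_mul_eq_mul_left hm (show m * (z:ℕ) = m * z' by omega)
    exact this
  exact ⟨Fin.ext hx, Fin.ext hy, Fin.ext hz⟩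

/-- For all positive integers n, m, l, the R-matrices satisfy the
Yang–Baxter equation
R^{(n,m)}_{12} R^{(n,l)}_{13} R^{(m,l)}_{23} = R^{(m,l)}_{23} R^{(n,l)}_{13} R^{(n,m)}_{12}
in M_n(C) ⊗ M_m(C) ⊗ M_l(C). -/
theorem stmt_17 (n m l : ℕ) (hn : 0 < n) (hm : 0 < m) (hl : 0 < l) :
    leg12 l (Rmat n m) * leg13 m (Rmat n l) * leg23 n (Rmat m l) =
      leg23 n (Rmat m l) * leg13 m (Rmat n l) * leg12 l (Rmat n m) := by
  rw [Rmat_eq n m hn hm, Rmat_eq n l hn hl, Rmat_eq m l hm hl,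
    leg12_perm, leg13_perm, leg23_perm, permMat_mul, permMat_mul,
    permMat_mul, permMat_mul]
  refine congrArg permMat (funext fun q => ?_)
  obtain ⟨i, j, k⟩ := q
  simp only [Function.comp_apply]
  -- LHS intermediate values
  set A := rperm m l hm hl (j, k) with hA
  have eA : m * (A.2 : ℕ) + A.1 = l * j + k := (rperm_spec m l hm hl (j,k) A).mp hA
  set B := rperm n l hn hl (i, A.2) with hB
  have eB : n * (B.2 : ℕ) + B.1 = l * i + A.2 := (rperm_spec n l hn hl (i,A.2) B).mp hB
  set C := rperm n m hn hm (B.1, A.1) with hC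
  have eC : n * (C.2 : ℕ) + C.1 = m * B.1 + A.1 := (rperm_spec n m hn hm (B.1,A.1) C).mp hC
  -- RHS intermediate values
  set D := rperm n m hn hm (i, j) with hD
  have eD : n * (D.2 : ℕ) + D.1 = m * i + j := (rperm_spec n m hn hm (i,j) D).mp hD
  set E := rperm n l hn hl (D.1, k) with hE
  have eE : n * (E.2 : ℕ) + E.1 = l * D.1 + k := (rperm_spec n l hn hl (D.1,k) E).mp hE
  set F := rperm m l hm hl (D.2, E.2) with hF
  have eF : m * (F.2 : ℕ) + F.1 = l * D.2 + E.2 := (rperm_spec m l hm hl (D.2,E.2) F).mp hF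
  have key : (C.1 : ℕ) + n * ((C.2 : ℕ) + m * (B.2 : ℕ))
      = (E.1 : ℕ) + n * ((F.1 : ℕ) + m * (F.2 : ℕ)) := by
    have t1 : (C.1 : ℕ) + n * ((C.2 : ℕ) + m * (B.2 : ℕ)) = l * m * i + l * j + k := by
      calc (C.1 : ℕ) + n * ((C.2 : ℕ) + m * B.2)
          = (n * C.2 + C.1) + m * (n * B.2) := by ring
        _ = (m * B.1 + A.1) + m * (n * B.2) := by rw [eC]
        _ = m * (n * B.2 + B.1) + A.1 := by ring
        _ = m * (l * i + A.2) + A.1 := by rw [eB]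
        _ = l * m * i + (m * A.2 + A.1) := by ring
        _ = l * m * i + (l * j + k) := by rw [eA]
        _ = l * m * i + l * j + k := by ring
    have t2 : (E.1 : ℕ) + n * ((F.1 : ℕ) + m * (F.2 : ℕ)) = l * m * i + l * j + k := by
      calc (E.1 : ℕ) + n * ((F.1 : ℕ) + m * F.2)
          = (E.1 : ℕ) + n * (m * F.2 + F.1) := by ring
        _ = (E.1 : ℕ) + n * (l * D.2 + E.2) := by rw [eF]
        _ = l * (n * D.2) + (n * E.2 + E.1) := by ring
        _ = l * (n * D.2) + (l * D.1 + k) := by rw [eE]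
        _ = l * (n * D.2 + D.1) + k := by ring
        _ = l * (m * i + j) + k := by rw [eD]
        _ = l * m * i + l * j + k := by ring
    rw [t1, t2]
  obtain ⟨h1, h2, h3⟩ := triple_unique C.1 E.1 C.2 F.1 B.2 F.2 key
  exact Prod.ext h1 (Prod.ext h2 h3)
end
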